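/- Let Q = Re(u₀ ∂_{u₀} ∧ ∂_{v₀}) be the real part of the holomorphic bivector on ℂ², and f₀ = log(u₀ū₀/(1 + u₀ū₀)) (defined for u₀ ≠ 0). Then the Hamiltonian vector field Q(df₀) equals (1/(1 + u₀ū₀)) Re(∂_{v₀}), which extends smoothly across u₀ = 0. -/

import Mathlib

/-- The holomorphic Wirtinger derivative `∂/∂u₀` of a real-valued function on `ℂ²`,
as a complex number. -/
noncomputable def duR (f : ℂ × ℂ → ℝ) (p : ℂ × ℂ) : ℂ :=
  (1 / 2 : ℂ) * (((fderiv ℝ f p (1, 0) : ℝ) : ℂ)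
    - Complex.I * ((fderiv ℝ f p (Complex.I, 0) : ℝ) : ℂ))

/-- The holomorphic Wirtinger derivative `∂/∂v₀` of a real-valued function on `ℂ²`. -/
noncomputable def dvR (f : ℂ × ℂ → ℝ) (p : ℂ × ℂ) : ℂ :=
  (1 / 2 : ℂ) * (((fderiv ℝ f p (0, 1) : ℝ) : ℂ)
    - Complex.I * ((fderiv ℝ f p (0, Complex.I) : ℝ) : ℂ))

/-- The singular Kähler potential `f₀ = log(|u₀|²/(1 + |u₀|²))`. -/
noncomputable def f0 (p : ℂ × ℂ) : ℝ :=
  Real.log (Complex.normSq p.1 / (1 + Complex.normSq p.1))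

lemma f0_eq : f0 = fun p : ℂ × ℂ =>
    Real.log (Complex.normSq p.1) - Real.log (1 + Complex.normSq p.1) := by
  funext p
  rcases eq_or_ne (Complex.normSq p.1) 0 with h | h
  · simp [f0, h]
  · have h1 : (1 : ℝ) + Complex.normSq p.1 ≠ 0 :=
      (add_pos_of_pos_of_nonneg one_pos (Complex.normSq_nonneg _)).ne'
    rw [f0, Real.log_div h h1]

section
variable (p : ℂ × ℂ)

noncomputable def Rcl : ℂ × ℂ →L[ℝ] ℝ := Complex.reCLM.comp (ContinuousLinearMap.fst ℝ ℂ ℂ)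
noncomputable def Icl : ℂ × ℂ →L[ℝ] ℝ := Complex.imCLM.comp (ContinuousLinearMap.fst ℝ ℂ ℂ)

lemma hasFDeriv_normSq (p : ℂ × ℂ) :
    HasFDerivAt (fun q : ℂ × ℂ => Complex.normSq q.1)
      ((p.1.re • Rcl + p.1.re • Rcl) + (p.1.im • Icl + p.1.im • Icl)) p := by
  have h1 : HasFDerivAt (fun q : ℂ × ℂ => q.1.re) Rcl p := (Rcl).hasFDerivAt
  have h2 : HasFDerivAt (fun q : ℂ × ℂ => q.1.im) Icl p := (Icl).hasFDerivAt
  have := (h1.mul h1).add (h2.mul h2)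
  simpa [Complex.normSq_apply, Pi.mul_def, Pi.add_def] using this

lemma fderiv_f0 (p : ℂ × ℂ) (hp : p.1 ≠ 0) :
    fderiv ℝ f0 p = ((Complex.normSq p.1)⁻¹ - (1 + Complex.normSq p.1)⁻¹) •
      ((p.1.re • Rcl + p.1.re • Rcl) + (p.1.im • Icl + p.1.im • Icl)) := by
  have hn : (0:ℝ) < Complex.normSq p.1 := Complex.normSq_pos.mpr hp
  have hD := hasFDeriv_normSq p
  have hL1 : HasFDerivAt (fun q : ℂ × ℂ => Real.log (Complex.normSq q.1))
      ((Complex.normSq p.1)⁻¹ • ((p.1.re • Rcl + p.1.re • Rcl) + (p.1.im • Icl + p.1.im • Icl))) p :=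
    by have := (Real.hasDerivAt_log hn.ne').comp_hasFDerivAt p hD; exact this
  have hD2 : HasFDerivAt (fun q : ℂ × ℂ => 1 + Complex.normSq q.1)
      ((p.1.re • Rcl + p.1.re • Rcl) + (p.1.im • Icl + p.1.im • Icl)) p := hD.const_add 1
  have hn2 : (0:ℝ) < 1 + Complex.normSq p.1 := by positivity
  have hL2 : HasFDerivAt (fun q : ℂ × ℂ => Real.log (1 + Complex.normSq q.1))
      ((1 + Complex.normSq p.1)⁻¹ • ((p.1.re • Rcl + p.1.re • Rcl) + (p.1.im • Icl + p.1.im • Icl))) p :=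
    by have := (Real.hasDerivAt_log hn2.ne').comp_hasFDerivAt p hD2; exact this
  have := (hL1.sub hL2).fderiv
  rw [f0_eq, show (fun p : ℂ × ℂ => Real.log (Complex.normSq p.1) - Real.log (1 + Complex.normSq p.1)) = (fun q : ℂ × ℂ => Real.log (Complex.normSq q.1)) - (fun q : ℂ × ℂ => Real.log (1 + Complex.normSq q.1)) from rfl, this, ← sub_smul]

end

/-- For `Q = Re(u₀ ∂_{u₀} ∧ ∂_{v₀})` and `f₀ = log(|u₀|²/(1+|u₀|²))`, the Hamiltonian
vector field `Q(df₀) = Re(u₀ (∂f₀/∂u₀) ∂_{v₀} - u₀ (∂f₀/∂v₀) ∂_{u₀})` equals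
`(1/(1+|u₀|²)) Re(∂_{v₀})`: indeed `u₀ ∂f₀/∂u₀ = 1/(1+|u₀|²)` and `∂f₀/∂v₀ = 0`
for `u₀ ≠ 0`, and the coefficient `1/(1+|u₀|²)` extends smoothly across `u₀ = 0`. -/
theorem hamiltonian_field_smooth :
    (∀ p : ℂ × ℂ, p.1 ≠ 0 →
      p.1 * duR f0 p = 1 / (1 + (Complex.normSq p.1 : ℂ)) ∧ dvR f0 p = 0) ∧
    ContDiff ℝ (⊤ : ℕ∞) (fun p : ℂ × ℂ => (1 : ℂ) / (1 + (Complex.normSq p.1 : ℂ))) := by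
  constructor
  · intro p hp
    have hn : (0:ℝ) < Complex.normSq p.1 := Complex.normSq_pos.mpr hp
    have hn2 : (0:ℝ) < 1 + Complex.normSq p.1 := by positivity
    have hf := fderiv_f0 p hp
    set c : ℝ := (Complex.normSq p.1)⁻¹ - (1 + Complex.normSq p.1)⁻¹ with hc
    have e1 : fderiv ℝ f0 p (1, 0) = c * (2 * p.1.re) := by
      rw [hf]; simp [Rcl, Icl]; ring
    have e2 : fderiv ℝ f0 p (Complex.I, 0) = c * (2 * p.1.im) := by
      rw [hf]; simp [Rcl, Icl]; ring
    have e3 : fderiv ℝ f0 p (0, 1) = 0 := by rw [hf]; simp [Rcl, Icl]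
    have e4 : fderiv ℝ f0 p (0, Complex.I) = 0 := by rw [hf]; simp [Rcl, Icl]
    constructor
    · rw [duR, e1, e2]
      have hcs : p.1 * ((1/2 : ℂ) * (((c * (2 * p.1.re) : ℝ) : ℂ)
          - Complex.I * ((c * (2 * p.1.im) : ℝ) : ℂ)))
          = (c : ℂ) * (p.1 * (starRingEnd ℂ) p.1) := by
        rw [Complex.mul_conj]
        push_cast
        rw [Complex.ext_iff]
        constructor <;> simp [Complex.normSq_apply] <;> ring
      rw [hcs, Complex.mul_conj]
      have hne : ((Complex.normSq p.1 : ℝ) : ℂ) ≠ 0 := by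
        exact_mod_cast hn.ne'
      have hne2 : (1 + ((Complex.normSq p.1 : ℝ) : ℂ)) ≠ 0 := by
        have : ((1 + Complex.normSq p.1 : ℝ) : ℂ) ≠ 0 := by exact_mod_cast hn2.ne'
        push_cast at this; exact this
      rw [hc]
      push_cast
      field_simp
      ring
    · rw [dvR, e3, e4]; simp
  · have hre : ContDiff ℝ (⊤ : ℕ∞) (fun p : ℂ × ℂ => p.1.re) :=
      Complex.reCLM.contDiff.comp contDiff_fst
    have him : ContDiff ℝ (⊤ : ℕ∞) (fun p : ℂ × ℂ => p.1.im) :=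
      Complex.imCLM.contDiff.comp contDiff_fst
    have hreal : ContDiff ℝ (⊤ : ℕ∞) (fun p : ℂ × ℂ => Complex.normSq p.1) := by
      simp only [Complex.normSq_apply]
      exact (hre.mul hre).add (him.mul him)
    have hdiv : ContDiff ℝ (⊤ : ℕ∞) (fun p : ℂ × ℂ => (1:ℝ) / (1 + Complex.normSq p.1)) :=
      contDiff_const.div (contDiff_const.add hreal)
        (fun p => (add_pos_of_pos_of_nonneg one_pos (Complex.normSq_nonneg _)).ne')
    have := Complex.ofRealCLM.contDiff.comp hdiv
    convert this using 2 with p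
    simp only [Function.comp_apply, Complex.ofRealCLM_apply]
    push_cast
    ring
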